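/- For any word w in the 3-strand braid group and any t ∈ ℂ×, the spectral radius of B_t(w) is at most the spectral radius of B_{-|t|}(w). -/

import Mathlib

open Matrix

/-- Letters generating the 3-strand braid group: σ₁, σ₂ and their formal inverses. -/
inductive BLetter
  | s1 | s2 | s1inv | s2inv
deriving DecidableEq

/-- The reduced Burau representation of `B₃` evaluated at `t ∈ ℂ`, on each letter. -/
noncomputable def burauLetter (t : ℂ) : BLetter → Matrix (Fin 2) (Fin 2) ℂ
  | .s1 => !![-t, 1; 0, 1]
  | .s2 => !![1, 0; t, -t]
  | .s1inv => !![-t⁻¹, t⁻¹; 0, 1]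
  | .s2inv => !![1, 0; 1, -t⁻¹]

/-- The Burau matrix of a word in the generators and their inverses. -/
noncomputable def burauWord (t : ℂ) (w : List BLetter) : Matrix (Fin 2) (Fin 2) ℂ :=
  (w.map (burauLetter t)).prod

open scoped NNReal ENNReal

namespace BurauAux

abbrev M2 := Matrix (Fin 2) (Fin 2) ℂ

lemma mem_spectrum_iff_det {M : M2} {z : ℂ} :
    z ∈ spectrum ℂ M ↔ (z • (1 : M2) - M).det = 0 := by
  rw [spectrum.mem_iff, Algebra.algebraMap_eq_smul_one, Matrix.isUnit_iff_isUnit_det,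
    isUnit_iff_ne_zero, not_ne_iff]

lemma spectralRadius_eq_iSup (M : M2) :
    spectralRadius ℂ M = ⨆ z ∈ spectrum ℂ M, (‖z‖₊ : ENNReal) := rfl

/-- spectrum of a conjugate -/
lemma spectrum_conj {G M : M2} (hG : IsUnit G.det) :
    spectrum ℂ (G * M * G⁻¹) = spectrum ℂ M := by
  ext z
  rw [mem_spectrum_iff_det, mem_spectrum_iff_det]
  have h1 : z • (1 : M2) - G * M * G⁻¹ = G * (z • (1 : M2) - M) * G⁻¹ := by
    rw [Matrix.mul_sub, Matrix.sub_mul]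
    congr 1
    rw [Matrix.mul_smul, Matrix.smul_mul, Matrix.mul_one, Matrix.mul_nonsing_inv _ hG]
  rw [h1, Matrix.det_mul, Matrix.det_mul]
  have h2 : G.det * (z • (1 : M2) - M).det * G⁻¹.det
      = (z • (1 : M2) - M).det * (G.det * G⁻¹.det) := by ring
  rw [h2, ← Matrix.det_mul, Matrix.mul_nonsing_inv _ hG, Matrix.det_one, mul_one]

lemma spectralRadius_conj {G M : M2} (hG : IsUnit G.det) :
    spectralRadius ℂ (G * M * G⁻¹) = spectralRadius ℂ M := by
  rw [spectralRadius_eq_iSup, spectralRadius_eq_iSup, spectrum_conj hG]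

/-- spectrum of a (nonzero) scalar multiple -/
lemma mem_spectrum_smul {c : ℂ} (hc : c ≠ 0) {M : M2} {z : ℂ} :
    z ∈ spectrum ℂ (c • M) ↔ c⁻¹ * z ∈ spectrum ℂ M := by
  rw [mem_spectrum_iff_det, mem_spectrum_iff_det]
  have h1 : z • (1 : M2) - c • M = c • ((c⁻¹ * z) • (1 : M2) - M) := by
    rw [smul_sub, smul_smul]
    field_simp
  rw [h1, Matrix.det_smul]
  simp [pow_eq_zero_iff, hc]

lemma spectralRadius_smul (c : ℂ) (hc : c ≠ 0) (M : M2) :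
    spectralRadius ℂ (c • M) = (‖c‖₊ : ENNReal) * spectralRadius ℂ M := by
  rw [spectralRadius_eq_iSup, spectralRadius_eq_iSup, ENNReal.mul_iSup]
  apply le_antisymm
  · refine iSup₂_le fun z hz => ?_
    rw [mem_spectrum_smul hc] at hz
    refine le_trans ?_ (le_iSup _ (c⁻¹ * z))
    rw [ENNReal.mul_iSup]
    refine le_trans ?_ (le_iSup _ hz)
    rw [← ENNReal.coe_mul, ← nnnorm_mul]
    have : c * (c⁻¹ * z) = z := by field_simp
    rw [this]
  · refine iSup_le fun z => ?_
    rw [ENNReal.mul_iSup]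
    refine iSup_le fun hz => ?_
    have hz' : c * z ∈ spectrum ℂ (c • M) := by
      rw [mem_spectrum_smul hc, ← mul_assoc, inv_mul_cancel₀ hc, one_mul]
      exact hz
    refine le_trans ?_ (le_iSup₂ (c * z) hz')
    rw [← ENNReal.coe_mul, ← nnnorm_mul]

/-- Perron root of `!![a,b;c,d]`. -/
noncomputable def perron (a b c d : ℝ) : ℝ :=
  (a + d + Real.sqrt ((a - d)^2 + 4*b*c)) / 2

section PF
variable {a b c d : ℝ} (ha : 0 ≤ a) (hb : 0 ≤ b) (hc : 0 ≤ c) (hd : 0 ≤ d)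

include hb hc in
lemma sqrt_ge_abs : Real.sqrt ((a - d)^2 + 4*b*c) ≥ |a - d| := by
  have h1 : Real.sqrt ((a-d)^2) ≤ Real.sqrt ((a-d)^2 + 4*b*c) :=
    Real.sqrt_le_sqrt (by nlinarith)
  rwa [Real.sqrt_sq_eq_abs] at h1

include ha hb hc hd

lemma perron_ge_a : a ≤ perron a b c d := by
  have := sqrt_ge_abs hb hc (a := a) (d := d)
  unfold perron
  cases abs_cases (a - d) with
  | inl h => nlinarith [h.1]
  | inr h => nlinarith [h.1]

lemma perron_ge_d : d ≤ perron a b c d := by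
  have := sqrt_ge_abs hb hc (a := a) (d := d)
  cases abs_cases (a - d) with
  | inl h => unfold perron; nlinarith [h.1]
  | inr h => unfold perron; nlinarith [h.1]

lemma perron_nonneg : 0 ≤ perron a b c d := le_trans ha (perron_ge_a ha hb hc hd)

lemma perron_root : (perron a b c d - a) * (perron a b c d - d) = b * c := by
  have hsq : Real.sqrt ((a - d)^2 + 4*b*c) ^ 2 = (a - d)^2 + 4*b*c :=
    Real.sq_sqrt (by nlinarith)
  unfold perron
  nlinarith [hsq]

/-- 2×2 Perron–Frobenius subinvariance. -/
lemma pf_subinvariant {x0 x1 e : ℝ} (hx0 : 0 ≤ x0) (hx1 : 0 ≤ x1)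
    (hx : x0 ≠ 0 ∨ x1 ≠ 0)
    (h0 : e * x0 ≤ a * x0 + b * x1) (h1 : e * x1 ≤ c * x0 + d * x1) :
    e ≤ perron a b c d := by
  by_contra hgt
  push_neg at hgt
  have hea : a < e := lt_of_le_of_lt (perron_ge_a ha hb hc hd) hgt
  have hed : d < e := lt_of_le_of_lt (perron_ge_d ha hb hc hd) hgt
  rcases eq_or_lt_of_le hx0 with h00 | h00
  · rcases eq_or_lt_of_le hx1 with h11 | h11
    · exact hx.elim (fun h => h h00.symm) (fun h => h h11.symm)
    · nlinarith
  · rcases eq_or_lt_of_le hx1 with h11 | h11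
    · nlinarith
    · have k0 : (e - a) * x0 ≤ b * x1 := by nlinarith
      have k1 : (e - d) * x1 ≤ c * x0 := by nlinarith
      have key : (e - a) * (e - d) ≤ b * c := by
        have hm : ((e - a) * x0) * ((e - d) * x1) ≤ (b * x1) * (c * x0) := by
          apply mul_le_mul k0 k1 (by nlinarith) (by positivity)
        have hxx : 0 < x0 * x1 := mul_pos h00 h11
        nlinarith
      have hroot := perron_root ha hb hc hd
      have hpa := perron_ge_a ha hb hc hd
      have hpd := perron_ge_d ha hb hc hd
      nlinarith [mul_pos (sub_pos.mpr hgt) (sub_pos.mpr hgt)]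

end PF

/-- Entrywise domination implies spectral radius comparison, for 2×2 complex matrices
with dominating matrix having nonnegative real entries. -/
lemma spectralRadius_le_of_dominated {C M : M2}
    (hM : ∀ i j, (M i j).im = 0 ∧ 0 ≤ (M i j).re)
    (hCM : ∀ i j, ‖C i j‖ ≤ (M i j).re) :
    spectralRadius ℂ C ≤ spectralRadius ℂ M := by
  set a := (M 0 0).re with hA
  set b := (M 0 1).re with hB
  set c := (M 1 0).re with hC
  set d := (M 1 1).re with hD
  have ha : 0 ≤ a := (hM 0 0).2
  have hb : 0 ≤ b := (hM 0 1).2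
  have hc : 0 ≤ c := (hM 1 0).2
  have hd : 0 ≤ d := (hM 1 1).2
  set μ := perron a b c d with hμ
  have hμ0 : 0 ≤ μ := perron_nonneg ha hb hc hd
  have hM00 : M 0 0 = (a : ℂ) := Complex.ext rfl (hM 0 0).1
  have hM01 : M 0 1 = (b : ℂ) := Complex.ext rfl (hM 0 1).1
  have hM10 : M 1 0 = (c : ℂ) := Complex.ext rfl (hM 1 0).1
  have hM11 : M 1 1 = (d : ℂ) := Complex.ext rfl (hM 1 1).1
  have hμspec : (μ : ℂ) ∈ spectrum ℂ M := by
    rw [mem_spectrum_iff_det, Matrix.det_fin_two]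
    simp only [Matrix.sub_apply, Matrix.smul_apply, Matrix.one_apply_eq, smul_eq_mul, mul_one,
      Matrix.one_apply_ne (by decide : (0 : Fin 2) ≠ 1),
      Matrix.one_apply_ne (by decide : (1 : Fin 2) ≠ 0)]
    rw [hM00, hM01, hM10, hM11]
    have hr : ((μ - a) * (μ - d) - b * c : ℝ) = 0 := by
      have := perron_root ha hb hc hd; linarith
    have hrC : ((μ:ℂ) - a) * ((μ:ℂ) - d) - b * c = 0 := by exact_mod_cast hr
    push_cast
    linear_combination hrC

  refine iSup₂_le fun z hz => ?_
  have hzle : ‖z‖ ≤ μ := by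
    rw [mem_spectrum_iff_det] at hz
    obtain ⟨v, hv0, hv⟩ := (Matrix.exists_mulVec_eq_zero_iff).2 hz
    have hCv : ∀ i, z * v i = C i 0 * v 0 + C i 1 * v 1 := by
      intro i
      have h := congrFun hv i
      fin_cases i <;>
      · simp only [Matrix.mulVec, dotProduct, Fin.sum_univ_two, Matrix.sub_apply,
          Matrix.smul_apply, Matrix.one_apply, smul_eq_mul, Pi.zero_apply] at h
        norm_num at h
        simp only [Fin.zero_eta, Fin.mk_one, Fin.isValue]
        linear_combination h
    set x0 := ‖v 0‖ with hx0d
    set x1 := ‖v 1‖ with hx1d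
    have key : ∀ i, ‖z‖ * ‖v i‖
        ≤ (M i 0).re * x0 + (M i 1).re * x1 := by
      intro i
      calc ‖z‖ * ‖v i‖ = ‖z * v i‖ := (norm_mul z (v i)).symm
        _ = ‖C i 0 * v 0 + C i 1 * v 1‖ := by rw [hCv i]
        _ ≤ ‖C i 0‖ * x0 + ‖C i 1‖ * x1 := by
            refine le_trans (norm_add_le _ _) ?_
            rw [norm_mul, norm_mul]
        _ ≤ (M i 0).re * x0 + (M i 1).re * x1 := by
            gcongr
            · exact hCM i 0
            · exact hCM i 1
    have hxne : x0 ≠ 0 ∨ x1 ≠ 0 := by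
      by_contra hcon
      push_neg at hcon
      apply hv0
      funext i
      fin_cases i
      · exact norm_eq_zero.mp hcon.1
      · exact norm_eq_zero.mp hcon.2
    exact pf_subinvariant ha hb hc hd (norm_nonneg _) (norm_nonneg _)
      hxne (key 0) (key 1)
  refine le_iSup₂_of_le (μ : ℂ) hμspec ?_
  have : ‖z‖₊ ≤ ‖(μ:ℂ)‖₊ := by
    rw [← NNReal.coe_le_coe]
    simp only [coe_nnnorm, Complex.norm_real, Real.norm_eq_abs]
    exact le_trans hzle (le_abs_self μ)
  exact_mod_cast this

noncomputable def MS (u : ℂ) : M2 := !![0, -u; -u^2, 0]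
noncomputable def MU (u : ℂ) : M2 := !![0, -u; u, -u]
noncomputable def Eval (u : ℂ) (W : List Bool) : M2 :=
  (W.map (fun b => if b then MU u else MS u)).prod
@[simp] lemma Eval_nil (u : ℂ) : Eval u [] = 1 := rfl
@[simp] lemma Eval_cons (u : ℂ) (x : Bool) (l : List Bool) :
    Eval u (x :: l) = (if x then MU u else MS u) * Eval u l := by simp [Eval]
@[simp] lemma Eval_append (u : ℂ) (l l' : List Bool) :
    Eval u (l ++ l') = Eval u l * Eval u l' := by simp [Eval]
lemma MS_sq (u : ℂ) : MS u * MS u = (u^3) • (1 : M2) := by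
  ext i j; fin_cases i <;> fin_cases j <;>
    simp [MS, Matrix.mul_apply, Fin.sum_univ_two, Matrix.one_apply] <;> ring
lemma MU_cube (u : ℂ) : MU u * (MU u * MU u) = (u^3) • (1 : M2) := by
  ext i j; fin_cases i <;> fin_cases j <;>
    simp [MU, Matrix.mul_apply, Fin.sum_univ_two, Matrix.one_apply] <;> ring
lemma det_MS (u : ℂ) : (MS u).det = -(u^3) := by simp [MS, Matrix.det_fin_two_of]; ring
lemma det_MU (u : ℂ) : (MU u).det = u^2 := by simp [MU, Matrix.det_fin_two_of]; ring
lemma det_Eval_ne (u : ℂ) (hu : u ≠ 0) (l : List Bool) : (Eval u l).det ≠ 0 := by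
  induction l with
  | nil => simp
  | cons x l ih =>
    rw [Eval_cons, Matrix.det_mul]
    cases x <;> simp [det_MS, det_MU] <;> exact ⟨hu, ih⟩
lemma isUnit_Eval (u : ℂ) (hu : u ≠ 0) (l : List Bool) : IsUnit (Eval u l) := by
  rw [Matrix.isUnit_iff_isUnit_det, isUnit_iff_ne_zero]; exact det_Eval_ne u hu l
lemma isUnit_MS (u : ℂ) (hu : u ≠ 0) : IsUnit (MS u).det := by
  rw [det_MS, isUnit_iff_ne_zero]; simpa using pow_ne_zero 3 hu
lemma isUnit_MU (u : ℂ) (hu : u ≠ 0) : IsUnit (MU u).det := by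
  rw [det_MU, isUnit_iff_ne_zero]; exact pow_ne_zero 2 hu
lemma trans_s1 (u : ℂ) : MU u * (MU u * MS u) = (u^3) • burauLetter u .s1 := by
  ext i j; fin_cases i <;> fin_cases j <;>
    simp [MU, MS, burauLetter, Matrix.mul_apply, Fin.sum_univ_two] <;> ring
lemma trans_s1inv (u : ℂ) (hu : u ≠ 0) : MS u * MU u = (u^3) • burauLetter u .s1inv := by
  ext i j; fin_cases i <;> fin_cases j <;>
    (simp [MU, MS, burauLetter, Matrix.mul_apply, Fin.sum_univ_two]) <;> (try field_simp) <;> (try ring)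
lemma trans_s2 (u : ℂ) : MS u * (MU u * MU u) = (u^3) • burauLetter u .s2 := by
  ext i j; fin_cases i <;> fin_cases j <;>
    simp [MU, MS, burauLetter, Matrix.mul_apply, Fin.sum_univ_two] <;> ring
lemma trans_s2inv (u : ℂ) (hu : u ≠ 0) : MU u * MS u = (u^3) • burauLetter u .s2inv := by
  ext i j; fin_cases i <;> fin_cases j <;>
    (simp [MU, MS, burauLetter, Matrix.mul_apply, Fin.sum_univ_two]) <;> (try field_simp) <;> (try ring)

/-! ## Normal forms -/

inductive NF
  | pos1 (p : List Bool) | pos2 (p : List Bool) | exS | exU | exU2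

def pos1Word (p : List Bool) : List BLetter := p.map (fun b => if b then .s1 else .s2inv)
def pos2Word (p : List Bool) : List BLetter := p.map (fun b => if b then .s2 else .s1inv)

noncomputable def nfMat (u : ℂ) : NF → M2
  | .pos1 p => burauWord u (pos1Word p)
  | .pos2 p => burauWord u (pos2Word p)
  | .exS => MS u
  | .exU => MU u
  | .exU2 => MU u * MU u

def Goal (W : List Bool) : Prop :=
  ∃ (k : ℕ) (g : List Bool) (nf : NF), ∀ u : ℂ, u ≠ 0 →
    Eval u W = ((u^3)^k) • (Eval u g * nfMat u nf * (Eval u g)⁻¹)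

lemma goal_of_terminal (W : List Bool) (k : ℕ) (nf : NF)
    (h : ∀ u : ℂ, u ≠ 0 → Eval u W = ((u^3)^k) • nfMat u nf) : Goal W := by
  refine ⟨k, [], nf, fun u hu => ?_⟩
  simp [h u hu]

lemma goal_step {W W' : List Bool} (g₀ : List Bool) (j : ℕ)
    (h : ∀ u : ℂ, u ≠ 0 →
      Eval u W = ((u^3)^j) • (Eval u g₀ * Eval u W' * (Eval u g₀)⁻¹))
    (hW' : Goal W') : Goal W := by
  obtain ⟨k, g, nf, hk⟩ := hW'
  refine ⟨j + k, g₀ ++ g, nf, fun u hu => ?_⟩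
  rw [h u hu, hk u hu, Eval_append, Matrix.mul_inv_rev]
  rw [Matrix.mul_smul, Matrix.smul_mul, smul_smul, ← pow_add]
  congr 1
  noncomm_ring

/-! ## Block decomposition for terminal mixed words -/

def blk (b : Bool) : List Bool := if b then [false, true, true] else [false, true]
def T2 (p : List Bool) : List Bool := p.flatMap blk

lemma Eval_T2 (p : List Bool) (u : ℂ) (hu : u ≠ 0) :
    Eval u (T2 p) = ((u^3)^p.length) • burauWord u (pos2Word p) := by
  induction p with
  | nil => simp [T2, burauWord, pos2Word]
  | cons b p ih =>
    have hblk : Eval u (blk b) = (u^3) • burauLetter u (if b then .s2 else .s1inv) := by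
      cases b
      · simpa [blk, mul_assoc] using trans_s1inv u hu
      · simpa [blk, mul_assoc] using trans_s2 u
    have : T2 (b :: p) = blk b ++ T2 p := by simp [T2]
    rw [this, Eval_append, hblk, ih]
    have : burauWord u (pos2Word (b :: p))
        = burauLetter u (if b then .s2 else .s1inv) * burauWord u (pos2Word p) := by
      simp [burauWord, pos2Word]
    rw [this, Matrix.smul_mul, Matrix.mul_smul, smul_smul]
    rw [List.length_cons, pow_succ]
    ring_nf

lemma decomp_aux : ∀ (n : ℕ) (l : List Bool), l.length ≤ n →
    ¬([false, false] <:+: l) → ¬([true, true, true] <:+: l) →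
    l.head? = some false → l.getLast? = some true → ∃ p, l = T2 p := by
  intro n
  induction n with
  | zero =>
    intro l hlen _ _ hhd _
    rw [List.length_eq_zero_iff.mp (Nat.le_zero.mp hlen)] at hhd
    simp at hhd
  | succ n ih =>
    intro l hlen hss huuu hhd hlast
    match l with
    | [] => simp at hhd
    | true :: l₁ => simp at hhd
    | [false] => simp at hlast
    | false :: false :: l₂ => exact absurd ⟨[], l₂, rfl⟩ hss
    | [false, true] => exact ⟨[false], rfl⟩
    | false :: true :: false :: l₃ =>
      have hss' : ¬([false, false] <:+: false :: l₃) := by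
        rintro ⟨s, t, h⟩
        exact hss ⟨false :: true :: s, t, by simp [← h]⟩
      have huuu' : ¬([true, true, true] <:+: false :: l₃) := by
        rintro ⟨s, t, h⟩
        exact huuu ⟨false :: true :: s, t, by simp [← h]⟩
      have hlast' : (false :: l₃).getLast? = some true := by
        rwa [List.getLast?_cons_cons, List.getLast?_cons_cons] at hlast
      have hlen' : (false :: l₃).length ≤ n := by
        simp only [List.length_cons] at hlen ⊢; omega
      obtain ⟨p, hp⟩ := ih (false :: l₃) hlen' hss' huuu' rfl hlast'
      exact ⟨false :: p, by simp [T2, blk] at hp ⊢; exact hp⟩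
    | [false, true, true] => exact ⟨[true], rfl⟩
    | false :: true :: true :: true :: l₄ => exact absurd ⟨[false], l₄, rfl⟩ huuu
    | false :: true :: true :: false :: l₄ =>
      have hss' : ¬([false, false] <:+: false :: l₄) := by
        rintro ⟨s, t, h⟩
        exact hss ⟨false :: true :: true :: s, t, by simp [← h]⟩
      have huuu' : ¬([true, true, true] <:+: false :: l₄) := by
        rintro ⟨s, t, h⟩
        exact huuu ⟨false :: true :: true :: s, t, by simp [← h]⟩
      have hlast' : (false :: l₄).getLast? = some true := by
        rwa [List.getLast?_cons_cons, List.getLast?_cons_cons,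
          List.getLast?_cons_cons] at hlast
      have hlen' : (false :: l₄).length ≤ n := by
        simp only [List.length_cons] at hlen ⊢; omega
      obtain ⟨p, hp⟩ := ih (false :: l₄) hlen' hss' huuu' rfl hlast'
      exact ⟨true :: p, by simp [T2, blk] at hp ⊢; exact hp⟩

@[simp] lemma Eval_cons_true (u : ℂ) (l : List Bool) :
    Eval u (true :: l) = MU u * Eval u l := by simp
@[simp] lemma Eval_cons_false (u : ℂ) (l : List Bool) :
    Eval u (false :: l) = MS u * Eval u l := by simp

def leadU : List Bool → ℕ
  | [] => 0
  | false :: _ => 0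
  | true :: l => leadU l + 1

@[simp] lemma leadU_false_cons (l : List Bool) : leadU (false :: l) = 0 := rfl
@[simp] lemma leadU_true_cons (l : List Bool) : leadU (true :: l) = leadU l + 1 := rfl

lemma leadU_append {l : List Bool} (h : false ∈ l) (l' : List Bool) :
    leadU (l ++ l') = leadU l := by
  induction l with
  | nil => simp at h
  | cons x rest ih =>
    cases x
    · simp
    · have hf : false ∈ rest := by simpa using h
      simp [ih hf]

lemma conj_helper {A X : M2} {c : ℂ} (hA : IsUnit A.det) (hsq : A * A = c • 1) :
    A * (X * A) = c • (A * X * A⁻¹) := by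
  have h1 : c • A⁻¹ = A := by
    have : c • A⁻¹ = (c • (1 : M2)) * A⁻¹ := by rw [Matrix.smul_mul, one_mul]
    rw [this, ← hsq, mul_assoc, Matrix.mul_nonsing_inv _ hA, mul_one]
  calc A * (X * A) = A * X * A := by rw [mul_assoc]
    _ = A * X * (c • A⁻¹) := by rw [h1]
    _ = c • (A * X * A⁻¹) := by rw [Matrix.mul_smul]

lemma goal_nil : Goal [] := by
  refine goal_of_terminal [] 0 (.pos1 []) (fun u hu => ?_)
  simp [nfMat, burauWord, pos1Word]

lemma goal_SS {x y : List Bool} (h : Goal (x ++ y)) : Goal (x ++ [false, false] ++ y) := by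
  refine goal_step [] 1 (fun u hu => ?_) h
  simp only [Eval_append, Eval_cons_false, Eval_nil, mul_one, inv_one, one_mul, pow_one]
  rw [MS_sq, Matrix.mul_smul, Matrix.smul_mul, mul_one]
lemma goal_UUU {x y : List Bool} (h : Goal (x ++ y)) : Goal (x ++ [true, true, true] ++ y) := by
  refine goal_step [] 1 (fun u hu => ?_) h
  simp only [Eval_append, Eval_cons_true, Eval_nil, mul_one, inv_one, one_mul, pow_one]
  rw [MU_cube, Matrix.mul_smul, Matrix.smul_mul, mul_one]

lemma goal_conj_false {mid : List Bool} (h : Goal mid) :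
    Goal (false :: (mid ++ [false])) := by
  refine goal_step [false] 1 (fun u hu => ?_) h
  simp only [Eval_cons_false, Eval_append, Eval_nil, mul_one, pow_one]
  exact conj_helper (isUnit_MS u hu) (MS_sq u)

lemma goal_rot {rest : List Bool} (h : Goal (rest ++ [true])) :
    Goal (true :: rest) := by
  refine goal_step [true] 0 (fun u hu => ?_) h
  simp only [Eval_cons_true, Eval_append, Eval_nil, mul_one, pow_zero, one_smul]
  rw [mul_assoc, mul_assoc, Matrix.mul_nonsing_inv _ (isUnit_MU u hu), mul_one]

lemma master_step (W : List Bool)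
    (red : ∀ W', W'.length + 2 ≤ W.length → Goal W')
    (rot : ∀ rest, W = true :: rest → false ∈ rest → Goal (rest ++ [true])) :
    Goal W := by
  by_cases hss : [false, false] <:+: W
  · obtain ⟨x, y, hxy⟩ := hss
    rw [← hxy]
    exact goal_SS (red (x ++ y) (by rw [← hxy]; simp; omega))
  by_cases huuu : [true, true, true] <:+: W
  · obtain ⟨x, y, hxy⟩ := huuu
    rw [← hxy]
    exact goal_UUU (red (x ++ y) (by rw [← hxy]; simp; omega))
  match W with
  | [] => exact goal_nil
  | [false] =>
    refine goal_of_terminal _ 0 .exS (fun u hu => ?_); simp [nfMat]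
  | [true] =>
    refine goal_of_terminal _ 0 .exU (fun u hu => ?_); simp [nfMat]
  | false :: y :: rest =>
    rcases hlast : (y :: rest).getLast (List.cons_ne_nil _ _) with _ | _
    · -- last letter is false
      have hsplit : (y :: rest).dropLast ++ [false] = y :: rest := by
        conv_rhs => rw [← List.dropLast_append_getLast (List.cons_ne_nil y rest)]
        rw [hlast]
      have hlen : (y :: rest).dropLast.length + 2 = (false :: y :: rest).length := by
        simp [List.length_dropLast]
      have := goal_conj_false (red _ (le_of_eq hlen))
      rwa [hsplit] at this
    · -- last letter is true : terminal pos2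
      have hlast' : (false :: y :: rest).getLast? = some true := by
        rw [List.getLast?_cons_cons]
        rw [List.getLast?_eq_getLast (List.cons_ne_nil _ _), hlast]
      obtain ⟨p, hp⟩ := decomp_aux (false :: y :: rest).length _ le_rfl hss huuu rfl hlast'
      rw [hp]
      exact goal_of_terminal _ p.length (.pos2 p) (fun u hu => Eval_T2 p u hu)
  | true :: y :: rest =>
    by_cases hf : false ∈ y :: rest
    · exact goal_rot (rot _ rfl hf)
    · -- all letters true
      have hy : y = true := by
        cases y
        · exact absurd List.mem_cons_self hf
        · rfl
      subst hy
      match rest with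
      | [] =>
        refine goal_of_terminal _ 0 .exU2 (fun u hu => ?_)
        simp [nfMat, mul_assoc]
      | z :: rest' =>
        have hz : z = true := by
          cases z
          · exact absurd (by simp) hf
          · rfl
        subst hz
        exact absurd ⟨[], rest', rfl⟩ huuu

theorem master (W : List Bool) : Goal W := by
  suffices H : ∀ n m (W : List Bool), W.length ≤ n → leadU W ≤ m → Goal W from
    H W.length (leadU W) W le_rfl le_rfl
  intro n
  induction n with
  | zero =>
    intro m W hlen _
    rw [List.length_eq_zero_iff.mp (Nat.le_zero.mp hlen)]
    exact goal_nil
  | succ n ihn =>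
    intro m
    induction m with
    | zero =>
      intro W hlen hlead
      refine master_step W (fun W' hW' => ihn (leadU W') W' (by omega) le_rfl) ?_
      intro rest hrest hf
      exfalso
      subst hrest
      simp at hlead
    | succ m ihm =>
      intro W hlen hlead
      refine master_step W (fun W' hW' => ihn (leadU W') W' (by omega) le_rfl) ?_
      intro rest hrest hf
      refine ihm (rest ++ [true]) ?_ ?_
      · subst hrest; simp at hlen ⊢; omega
      · subst hrest
        rw [leadU_append hf]
        simp at hlead
        omega

/-! ## Entrywise domination -/

def Dom (C M : M2) : Prop :=
  (∀ i j, (M i j).im = 0 ∧ 0 ≤ (M i j).re) ∧ (∀ i j, ‖C i j‖ ≤ (M i j).re)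

lemma Dom.one : Dom 1 1 := by
  constructor <;> intro i j <;> fin_cases i <;> fin_cases j <;>
    simp [Matrix.one_apply]

lemma Dom.mul {C1 M1 C2 M2' : M2} (h1 : Dom C1 M1) (h2 : Dom C2 M2') :
    Dom (C1 * C2) (M1 * M2') := by
  obtain ⟨h1n, h1d⟩ := h1
  obtain ⟨h2n, h2d⟩ := h2
  constructor
  · intro i j
    rw [Matrix.mul_apply, Fin.sum_univ_two]
    constructor
    · simp [Complex.add_im, Complex.mul_im, (h1n i 0).1, (h2n 0 j).1, (h1n i 1).1, (h2n 1 j).1]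
    · simp only [Complex.add_re, Complex.mul_re, (h1n i 0).1, (h2n 0 j).1, (h1n i 1).1,
        (h2n 1 j).1, mul_zero, zero_mul, sub_zero]
      have := (h1n i 0).2; have := (h2n 0 j).2; have := (h1n i 1).2; have := (h2n 1 j).2
      positivity
  · intro i j
    rw [Matrix.mul_apply, Fin.sum_univ_two, Matrix.mul_apply, Fin.sum_univ_two]
    calc ‖C1 i 0 * C2 0 j + C1 i 1 * C2 1 j‖
        ≤ ‖C1 i 0‖ * ‖C2 0 j‖
          + ‖C1 i 1‖ * ‖C2 1 j‖ := by
          refine le_trans (norm_add_le _ _) ?_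
          rw [norm_mul, norm_mul]
      _ ≤ (M1 i 0).re * (M2' 0 j).re + (M1 i 1).re * (M2' 1 j).re := by
          have k1 := mul_le_mul (h1d i 0) (h2d 0 j) (norm_nonneg _)
            (le_trans (norm_nonneg _) (h1d i 0))
          have k2 := mul_le_mul (h1d i 1) (h2d 1 j) (norm_nonneg _)
            (le_trans (norm_nonneg _) (h1d i 1))
          linarith
      _ = (M1 i 0 * M2' 0 j + M1 i 1 * M2' 1 j).re := by
          simp [Complex.add_re, Complex.mul_re, (h1n i 0).1, (h2n 0 j).1, (h1n i 1).1,
            (h2n 1 j).1]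

section Letters
variable {t : ℂ} (ht : t ≠ 0)

noncomputable def sOf (t : ℂ) : ℝ := ‖t‖
noncomputable def u₂Of (t : ℂ) : ℂ := -((sOf t : ℝ) : ℂ)

lemma u₂_ne (ht : t ≠ 0) : u₂Of t ≠ 0 := by
  simp only [u₂Of, ne_eq, neg_eq_zero, Complex.ofReal_eq_zero, sOf]
  exact norm_ne_zero_iff.mpr ht

lemma nnnorm_u₂ : ‖u₂Of t‖₊ = ‖t‖₊ := by
  ext
  simp [u₂Of, sOf, Complex.norm_real, Real.norm_eq_abs, abs_of_nonneg (norm_nonneg t)]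

include ht in
lemma dom_s1 : Dom (burauLetter t .s1) (burauLetter (u₂Of t) .s1) := by
  have h0 : ‖t‖ = sOf t := rfl
  constructor <;> intro i j <;> fin_cases i <;> fin_cases j <;>
    simp [burauLetter, u₂Of, sOf, norm_nonneg]

lemma u₂_inv (ht : t ≠ 0) : -(u₂Of t)⁻¹ = (((sOf t)⁻¹ : ℝ) : ℂ) := by
  rw [u₂Of, inv_neg, neg_neg, Complex.ofReal_inv]

include ht in
lemma dom_s2inv : Dom (burauLetter t .s2inv) (burauLetter (u₂Of t) .s2inv) := by
  have hs : (0:ℝ) < sOf t := norm_pos_iff.mpr ht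
  have hinv := u₂_inv ht
  constructor <;> intro i j <;> fin_cases i <;> fin_cases j <;>
    simp [burauLetter, hinv, map_inv₀, inv_nonneg, hs.le, sOf, norm_nonneg]

lemma dom_pos1 (ht : t ≠ 0) (p : List Bool) :
    Dom (burauWord t (pos1Word p)) (burauWord (u₂Of t) (pos1Word p)) := by
  induction p with
  | nil => exact Dom.one
  | cons b p ih =>
    have : ∀ (v : ℂ), burauWord v (pos1Word (b :: p))
        = burauLetter v (if b then .s1 else .s2inv) * burauWord v (pos1Word p) := by
      intro v; simp [burauWord, pos1Word]
    rw [this, this]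
    cases b
    · exact Dom.mul (dom_s2inv ht) ih
    · exact Dom.mul (dom_s1 ht) ih

lemma pos1_compare (ht : t ≠ 0) (p : List Bool) :
    spectralRadius ℂ (burauWord t (pos1Word p))
      ≤ spectralRadius ℂ (burauWord (u₂Of t) (pos1Word p)) := by
  obtain ⟨hn, hd⟩ := dom_pos1 ht p
  exact spectralRadius_le_of_dominated hn hd

end Letters

/-! ## pos2 comparison -/

noncomputable def Dm : M2 := !![1, 0; 0, -1]

lemma Dm_sq : Dm * Dm = 1 := by
  ext i j; fin_cases i <;> fin_cases j <;>
    simp [Dm, Matrix.mul_apply, Fin.sum_univ_two, Matrix.one_apply]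

lemma Dm_inv : Dm⁻¹ = Dm := Matrix.inv_eq_right_inv Dm_sq

lemma isUnit_Dm_det : IsUnit Dm.det := by
  simp [Dm, Matrix.det_fin_two_of]

lemma Dm_conj_mul (X Y : M2) : (Dm * X * Dm) * (Dm * Y * Dm) = Dm * (X * Y) * Dm := by
  have h : Dm * X * (Dm * (Dm * Y)) = Dm * X * Y := by
    rw [← mul_assoc Dm Dm Y, Dm_sq, one_mul]
  calc (Dm * X * Dm) * (Dm * Y * Dm) = Dm * X * (Dm * (Dm * Y)) * Dm := by
        simp only [mul_assoc]
    _ = Dm * (X * Y) * Dm := by rw [h]; simp only [mul_assoc]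

section Pos2
variable {t : ℂ}

include t in
lemma dom_s2 (ht : t ≠ 0) :
    Dom (burauLetter t .s2) (Dm * burauLetter (u₂Of t) .s2 * Dm) := by
  have h : Dm * burauLetter (u₂Of t) .s2 * Dm = !![1, 0; ((sOf t : ℝ) : ℂ), ((sOf t : ℝ) : ℂ)] := by
    ext i j
    fin_cases i <;> fin_cases j <;>
      simp [Dm, burauLetter, u₂Of, Matrix.mul_apply, Fin.sum_univ_two]
  rw [h]
  have hs : (0:ℝ) ≤ sOf t := norm_nonneg t
  constructor <;> intro i j <;> fin_cases i <;> fin_cases j <;>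
    simp [burauLetter, sOf, hs, norm_nonneg]

include t in
lemma dom_s1inv (ht : t ≠ 0) :
    Dom (burauLetter t .s1inv) (Dm * burauLetter (u₂Of t) .s1inv * Dm) := by
  have hs : (0:ℝ) < sOf t := norm_pos_iff.mpr ht
  have hinv := u₂_inv (t := t) ht
  have h : Dm * burauLetter (u₂Of t) .s1inv * Dm
      = !![(((sOf t)⁻¹ : ℝ) : ℂ), (((sOf t)⁻¹ : ℝ) : ℂ); 0, 1] := by
    ext i j
    fin_cases i <;> fin_cases j <;>
      simp [Dm, burauLetter, Matrix.mul_apply, Fin.sum_univ_two, u₂Of, inv_neg,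
        Complex.ofReal_inv]
  rw [h]
  constructor <;> intro i j <;> fin_cases i <;> fin_cases j <;>
    simp [burauLetter, map_inv₀, sOf, inv_nonneg, hs.le, norm_nonneg]

lemma dom_pos2 (ht : t ≠ 0) (p : List Bool) :
    Dom (burauWord t (pos2Word p)) (Dm * burauWord (u₂Of t) (pos2Word p) * Dm) := by
  induction p with
  | nil =>
    have : Dm * (1 : M2) * Dm = 1 := by rw [mul_one, Dm_sq]
    rw [show burauWord (u₂Of t) (pos2Word []) = (1 : M2) from rfl, this]
    exact Dom.one
  | cons b p ih =>
    have hw : ∀ (v : ℂ), burauWord v (pos2Word (b :: p))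
        = burauLetter v (if b then .s2 else .s1inv) * burauWord v (pos2Word p) := by
      intro v; simp [burauWord, pos2Word]
    rw [hw, hw, ← Dm_conj_mul]
    cases b
    · exact Dom.mul (dom_s1inv ht) ih
    · exact Dom.mul (dom_s2 ht) ih

lemma pos2_compare (ht : t ≠ 0) (p : List Bool) :
    spectralRadius ℂ (burauWord t (pos2Word p))
      ≤ spectralRadius ℂ (burauWord (u₂Of t) (pos2Word p)) := by
  obtain ⟨hn, hd⟩ := dom_pos2 ht p
  have h1 := spectralRadius_le_of_dominated hn hd
  have h2 : spectralRadius ℂ (Dm * burauWord (u₂Of t) (pos2Word p) * Dm)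
      = spectralRadius ℂ (burauWord (u₂Of t) (pos2Word p)) := by
    rw [show (Dm : M2) * burauWord (u₂Of t) (pos2Word p) * Dm
        = Dm * burauWord (u₂Of t) (pos2Word p) * Dm⁻¹ by rw [Dm_inv]]
    exact spectralRadius_conj isUnit_Dm_det
  rwa [h2] at h1

end Pos2

/-! ## Exceptional normal forms -/

noncomputable def ω : ℂ := ⟨-1/2, Real.sqrt 3 / 2⟩

lemma omega_rel : ω^2 + ω + 1 = 0 := by
  have h3 : Real.sqrt 3 ^ 2 = 3 := Real.sq_sqrt (by norm_num)
  apply Complex.ext <;>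
    simp [ω, pow_two, Complex.mul_re, Complex.mul_im, Complex.add_re, Complex.add_im] <;>
    nlinarith [h3]

lemma abs_omega : ‖ω‖ = 1 := by
  have h3 : Real.sqrt 3 ^ 2 = 3 := Real.sq_sqrt (by norm_num)
  rw [Complex.norm_def, Complex.normSq_apply]
  simp only [ω]
  rw [show (-1/2 : ℝ) * (-1/2) + Real.sqrt 3 / 2 * (Real.sqrt 3 / 2) = 1 by nlinarith [h3]]
  exact Real.sqrt_one

lemma nnnorm_eq_of_cube {z c : ℂ} (h : z^3 = c^3) : ‖z‖₊ = ‖c‖₊ := by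
  have h1 : ‖z‖₊^3 = ‖c‖₊^3 := by rw [← nnnorm_pow, ← nnnorm_pow, h]
  exact (pow_left_inj₀ zero_le zero_le (by norm_num)).mp h1

lemma quad_rho (X : M2) (c : ℂ) (hc : c ≠ 0)
    (hdet : ∀ z : ℂ, (z • (1:M2) - X).det = z^2 + c*z + c^2) :
    spectralRadius ℂ X = (‖c‖₊ : ENNReal) := by
  have hmem : ∀ z : ℂ, z ∈ spectrum ℂ X ↔ z^2 + c*z + c^2 = 0 := fun z => by
    rw [mem_spectrum_iff_det, hdet]
  apply le_antisymm
  · refine iSup₂_le fun z hz => ?_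
    rw [hmem] at hz
    have h3 : z^3 = c^3 := by linear_combination (z - c) * hz
    rw [nnnorm_eq_of_cube h3]
  · have hzω : (c * ω) ∈ spectrum ℂ X := by
      rw [hmem]
      linear_combination c^2 * omega_rel
    refine le_iSup₂_of_le (c * ω) hzω ?_
    have hω1 : ‖ω‖₊ = 1 := by
      ext; simp [abs_omega]
    rw [nnnorm_mul, hω1, mul_one]

lemma sqrt_rho (X : M2) (c : ℂ)
    (hdet : ∀ z : ℂ, (z • (1:M2) - X).det = z^2 - c) :
    spectralRadius ℂ X = ((NNReal.sqrt ‖c‖₊ : ℝ≥0) : ENNReal) := by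
  have hmem : ∀ z : ℂ, z ∈ spectrum ℂ X ↔ z^2 = c := fun z => by
    rw [mem_spectrum_iff_det, hdet, sub_eq_zero]
  apply le_antisymm
  · refine iSup₂_le fun z hz => ?_
    rw [hmem] at hz
    have : NNReal.sqrt (‖z‖₊^2) = NNReal.sqrt ‖c‖₊ := by rw [← nnnorm_pow, hz]
    rw [NNReal.sqrt_sq] at this
    rw [this]
  · obtain ⟨z, hz⟩ : ∃ z : ℂ, z^2 = c :=
      IsAlgClosed.exists_pow_nat_eq c (n := 2) (by norm_num)
    have hzs : z ∈ spectrum ℂ X := by rw [hmem]; exact hz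
    refine le_iSup₂_of_le z hzs ?_
    have : NNReal.sqrt ‖c‖₊ = ‖z‖₊ := by rw [← hz, nnnorm_pow, NNReal.sqrt_sq]
    rw [this]

lemma det_sub_MS (u z : ℂ) : (z • (1:M2) - MS u).det = z^2 - u^3 := by
  simp [MS, Matrix.det_fin_two, Matrix.sub_apply, Matrix.smul_apply, Matrix.one_apply]
  ring

lemma det_sub_MU (u z : ℂ) : (z • (1:M2) - MU u).det = z^2 + u*z + u^2 := by
  simp [MU, Matrix.det_fin_two, Matrix.sub_apply, Matrix.smul_apply, Matrix.one_apply]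
  ring

lemma MU_sq (u : ℂ) : MU u * MU u = !![-u^2, u^2; -u^2, 0] := by
  ext i j; fin_cases i <;> fin_cases j <;>
    simp [MU, Matrix.mul_apply, Fin.sum_univ_two] <;> ring

lemma det_sub_MU2 (u z : ℂ) : (z • (1:M2) - MU u * MU u).det = z^2 + u^2*z + (u^2)^2 := by
  rw [MU_sq]
  simp [Matrix.det_fin_two, Matrix.sub_apply, Matrix.smul_apply, Matrix.one_apply]
  ring

lemma nf_compare {t : ℂ} (ht : t ≠ 0) (nf : NF) :
    spectralRadius ℂ (nfMat t nf) ≤ spectralRadius ℂ (nfMat (u₂Of t) nf) := by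
  have hu2 : u₂Of t ≠ 0 := u₂_ne ht
  have hnn : ‖u₂Of t‖₊ = ‖t‖₊ := nnnorm_u₂
  cases nf with
  | pos1 p => exact pos1_compare ht p
  | pos2 p => exact pos2_compare ht p
  | exS =>
    show spectralRadius ℂ (MS t) ≤ spectralRadius ℂ (MS (u₂Of t))
    rw [sqrt_rho _ (t^3) (det_sub_MS t), sqrt_rho _ ((u₂Of t)^3) (det_sub_MS (u₂Of t))]
    rw [nnnorm_pow, nnnorm_pow, hnn]
  | exU =>
    show spectralRadius ℂ (MU t) ≤ spectralRadius ℂ (MU (u₂Of t))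
    rw [quad_rho _ t ht (det_sub_MU t), quad_rho _ (u₂Of t) hu2 (det_sub_MU (u₂Of t)), hnn]
  | exU2 =>
    show spectralRadius ℂ (MU t * MU t) ≤ spectralRadius ℂ (MU (u₂Of t) * MU (u₂Of t))
    rw [quad_rho _ (t^2) (pow_ne_zero 2 ht) (det_sub_MU2 t),
      quad_rho _ ((u₂Of t)^2) (pow_ne_zero 2 hu2) (det_sub_MU2 (u₂Of t))]
    rw [nnnorm_pow, nnnorm_pow, hnn]

/-! ## Translation -/

def τ' : BLetter → List Bool
  | .s1 => [true, true, false]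
  | .s1inv => [false, true]
  | .s2 => [false, true, true]
  | .s2inv => [true, false]

lemma Eval_letter {u : ℂ} (hu : u ≠ 0) (l : BLetter) :
    Eval u (τ' l) = (u^3) • burauLetter u l := by
  cases l
  · simpa [τ', mul_assoc] using trans_s1 u
  · simpa [τ', mul_assoc] using trans_s2 u
  · simpa [τ', mul_assoc] using trans_s1inv u hu
  · simpa [τ', mul_assoc] using trans_s2inv u hu

lemma Eval_flat {u : ℂ} (hu : u ≠ 0) (w : List BLetter) :
    Eval u (w.flatMap τ') = ((u^3)^w.length) • burauWord u w := by
  induction w with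
  | nil => simp [burauWord]
  | cons l w ih =>
    have : (l :: w).flatMap τ' = τ' l ++ w.flatMap τ' := by simp
    rw [this, Eval_append, Eval_letter hu, ih]
    have : burauWord u (l :: w) = burauLetter u l * burauWord u w := by
      simp [burauWord]
    rw [this, Matrix.smul_mul, Matrix.mul_smul, smul_smul, List.length_cons, pow_succ]
    ring_nf

/-! ## Main theorem -/

theorem main' (t : ℂ) (ht : t ≠ 0) (w : List BLetter) :
    spectralRadius ℂ (burauWord t w) ≤ spectralRadius ℂ (burauWord (u₂Of t) w) := by
  have hu2 : u₂Of t ≠ 0 := u₂_ne ht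
  have hnn : ‖u₂Of t‖₊ = ‖t‖₊ := nnnorm_u₂
  obtain ⟨k, g, nf, hk⟩ := master (w.flatMap τ')
  have key : ∀ u : ℂ, u ≠ 0 →
      (‖(u^3)^w.length‖₊ : ℝ≥0∞) * spectralRadius ℂ (burauWord u w)
        = (‖(u^3)^k‖₊ : ℝ≥0∞) * spectralRadius ℂ (nfMat u nf) := by
    intro u hu
    have h1 : ((u^3)^w.length) • burauWord u w
        = ((u^3)^k) • (Eval u g * nfMat u nf * (Eval u g)⁻¹) := by
      rw [← Eval_flat hu, hk u hu]
    have h2 := congrArg (spectralRadius ℂ) h1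
    rw [spectralRadius_smul _ (pow_ne_zero _ (pow_ne_zero _ hu)) _,
      spectralRadius_smul _ (pow_ne_zero _ (pow_ne_zero _ hu)) _] at h2
    rw [h2]
    congr 1
    exact spectralRadius_conj (by rw [isUnit_iff_ne_zero]; exact det_Eval_ne u hu g)
  have kt := key t ht
  have ku := key (u₂Of t) hu2
  rw [show ‖((u₂Of t)^3)^w.length‖₊ = ‖(t^3)^w.length‖₊ by
      rw [nnnorm_pow, nnnorm_pow, hnn, ← nnnorm_pow, ← nnnorm_pow],
    show ‖((u₂Of t)^3)^k‖₊ = ‖(t^3)^k‖₊ by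
      rw [nnnorm_pow, nnnorm_pow, hnn, ← nnnorm_pow, ← nnnorm_pow]] at ku
  have hne : (‖(t^3)^w.length‖₊ : ℝ≥0∞) ≠ 0 := by
    simp only [ne_eq, ENNReal.coe_eq_zero, nnnorm_eq_zero]
    exact pow_ne_zero _ (pow_ne_zero _ ht)
  have htop : (‖(t^3)^w.length‖₊ : ℝ≥0∞) ≠ ⊤ := ENNReal.coe_ne_top
  rw [← ENNReal.mul_le_mul_iff_right hne htop, kt, ku]
  exact mul_le_mul_right (nf_compare ht nf) _

end BurauAux


/-- For any word `w` in the 3-strand braid group and any `t ∈ ℂ×`,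
the spectral radius of `B_t(w)` is at most the spectral radius of `B_{-|t|}(w)`. -/
theorem burau_spectralRadius_le_neg_abs (t : ℂ) (ht : t ≠ 0) (w : List BLetter) :
    spectralRadius ℂ (burauWord t w) ≤
      spectralRadius ℂ (burauWord (-(‖t‖) : ℂ) w) := by
  exact BurauAux.main' t ht w
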